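/- arXiv:1905.10280 — 2 statements merged into one kernel-verified Lean document; each statement's English description precedes it below -/
import Mathlib

section
/- Fix θ > 0 and define p(a) = ψ₂(a) − (ψ₃(θ)/ψ₂(θ))·ψ₁(a) for real a > 0. Then p'(a) > 0 for all 0 < a < θ and p'(a) < 0 for all a > θ. Explicitly, p'(a) = 6[S₄(a) − (S₄(θ)/S₃(θ))·S₃(a)], and this quantity is strictly positive for 0 < a < θ and strictly negative for a > θ. -/
/-- `S j z = ∑_{k=0}^∞ 1/(z+k)^j`, the series defining the polygamma functions:
`ψ₁ = S₂`, `ψ₂ = −2S₃`, `ψ₃ = 6S₄`. -/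
noncomputable def S (j : ℕ) (z : ℝ) : ℝ := ∑' k : ℕ, 1 / (z + k) ^ j

lemma S_summable {j : ℕ} (hj : 1 < j) {x : ℝ} (hx : 0 < x) :
    Summable (fun k : ℕ => 1 / (x + k) ^ j) := by
  rw [← summable_nat_add_iff 1]
  have hbase : Summable (fun k : ℕ => 1 / ((k : ℝ) + 1) ^ j) := by
    have := (summable_nat_add_iff 1).mpr (Real.summable_one_div_nat_pow.mpr hj)
    simpa using this
  refine Summable.of_nonneg_of_le (fun k => by positivity) (fun k => ?_) hbase
  have h1 : (0:ℝ) < (k:ℝ) + 1 := by positivity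
  have h2 : ((k:ℝ) + 1) ≤ x + ((k+1 : ℕ):ℝ) := by push_cast; linarith
  gcongr

lemma key (u U d : ℝ) (hu : 0 < u) (hU : 0 < U) (hd : 0 < d) :
    0 < ((u+d)*U)^4*(d+(U-u)) + (u*(U+d))^4*(d-(U-u)) := by
  have hP : 0 < (u+d)*U := mul_pos (by linarith) hU
  have hQ : 0 < u*(U+d) := mul_pos hu (by linarith)
  have h : ((u+d)*U)^4*(d+(U-u)) + (u*(U+d))^4*(d-(U-u))
      = d*(((u+d)*U)^4+(u*(U+d))^4
        + (U-u)^2*((u+d)*U+u*(U+d))*(((u+d)*U)^2+(u*(U+d))^2)) := by ring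
  rw [h]
  apply mul_pos hd
  have h1 : 0 < ((u+d)*U)^4+(u*(U+d))^4 := by positivity
  have h2 : 0 ≤ (U-u)^2*((u+d)*U+u*(U+d))*(((u+d)*U)^2+(u*(U+d))^2) :=
    mul_nonneg (mul_nonneg (sq_nonneg _) (by linarith)) (by positivity)
  linarith

lemma frac (a b : ℝ) (ha : 0 < a) (hb : 0 < b) :
    1/a^4 * (1/b^3) - 1/b^4 * (1/a^3) = (b-a)/(a^4*b^4) := by
  field_simp

lemma term_pos {x y : ℝ} (hx : 0 < x) (hxy : x < y) (k l : ℕ) :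
    0 < (1/(x+k)^4 * (1/(y+l)^3) - 1/(y+k)^4 * (1/(x+l)^3))
      + (1/(x+l)^4 * (1/(y+k)^3) - 1/(y+l)^4 * (1/(x+k)^3)) := by
  have hu : (0:ℝ) < x + k := by positivity
  have hU : (0:ℝ) < x + l := by positivity
  have hd : (0:ℝ) < y - x := by linarith
  have hyk : y + (k:ℝ) = (x + k) + (y - x) := by ring
  have hyl : y + (l:ℝ) = (x + l) + (y - x) := by ring
  rw [hyk, hyl]
  set u := x + (k:ℝ) with hu'
  set U := x + (l:ℝ) with hU'
  set d := y - x with hd'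
  have hud : (0:ℝ) < u + d := by linarith
  have hUd : (0:ℝ) < U + d := by linarith
  have e1 : 1/u^4 * (1/(U+d)^3) - 1/(U+d)^4 * (1/u^3) = ((U+d)-u)/(u^4*(U+d)^4) :=
    frac u (U+d) hu hUd
  have e2 : 1/U^4 * (1/(u+d)^3) - 1/(u+d)^4 * (1/U^3) = ((u+d)-U)/(U^4*(u+d)^4) :=
    frac U (u+d) hU hud
  have goal_eq : (1/u^4 * (1/(U+d)^3) - 1/(u+d)^4 * (1/U^3))
      + (1/U^4 * (1/(u+d)^3) - 1/(U+d)^4 * (1/u^3))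
      = ((U+d)-u)/(u^4*(U+d)^4) + ((u+d)-U)/(U^4*(u+d)^4) := by
    rw [← e1, ← e2]; ring
  rw [goal_eq]
  have hne1 : (u^4*(U+d)^4 : ℝ) ≠ 0 := by positivity
  have hne2 : (U^4*(u+d)^4 : ℝ) ≠ 0 := by positivity
  rw [div_add_div _ _ hne1 hne2]
  apply div_pos
  · have hk := key u U d hu hU hd
    have : ((U+d)-u)*(U^4*(u+d)^4) + (u^4*(U+d)^4)*((u+d)-U)
        = ((u+d)*U)^4*(d+(U-u)) + (u*(U+d))^4*(d-(U-u)) := by ring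
    rw [this]; exact hk
  · positivity

lemma Gpos {x y : ℝ} (hx : 0 < x) (hxy : x < y) :
    0 < S 4 x * S 3 y - S 4 y * S 3 x := by
  have hy : 0 < y := hx.trans hxy
  have s4x := S_summable (j := 4) (by norm_num) hx
  have s3x := S_summable (j := 3) (by norm_num) hx
  have s4y := S_summable (j := 4) (by norm_num) hy
  have s3y := S_summable (j := 3) (by norm_num) hy
  have n4x : Summable (fun k : ℕ => ‖1 / (x + k) ^ 4‖) := summable_norm_iff.mpr s4x
  have n3x : Summable (fun k : ℕ => ‖1 / (x + k) ^ 3‖) := summable_norm_iff.mpr s3x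
  have n4y : Summable (fun k : ℕ => ‖1 / (y + k) ^ 4‖) := summable_norm_iff.mpr s4y
  have n3y : Summable (fun k : ℕ => ‖1 / (y + k) ^ 3‖) := summable_norm_iff.mpr s3y
  have P1 : S 4 x * S 3 y = ∑' z : ℕ × ℕ, (1/(x+z.1)^4) * (1/(y+z.2)^3) :=
    tsum_mul_tsum_of_summable_norm (f := fun k : ℕ => 1/(x+(k:ℝ))^4)
      (g := fun k : ℕ => 1/(y+(k:ℝ))^3) n4x n3y
  have P2 : S 4 y * S 3 x = ∑' z : ℕ × ℕ, (1/(y+z.1)^4) * (1/(x+z.2)^3) :=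
    tsum_mul_tsum_of_summable_norm (f := fun k : ℕ => 1/(y+(k:ℝ))^4)
      (g := fun k : ℕ => 1/(x+(k:ℝ))^3) n4y n3x
  have hS1 : Summable (fun z : ℕ × ℕ => (1/(x+z.1)^4) * (1/(y+z.2)^3)) :=
    summable_mul_of_summable_norm (f := fun k : ℕ => 1/(x+(k:ℝ))^4)
      (g := fun k : ℕ => 1/(y+(k:ℝ))^3) n4x n3y
  have hS2 : Summable (fun z : ℕ × ℕ => (1/(y+z.1)^4) * (1/(x+z.2)^3)) :=
    summable_mul_of_summable_norm (f := fun k : ℕ => 1/(y+(k:ℝ))^4)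
      (g := fun k : ℕ => 1/(x+(k:ℝ))^3) n4y n3x
  set F : ℕ × ℕ → ℝ :=
    fun z => (1/(x+z.1)^4) * (1/(y+z.2)^3) - (1/(y+z.1)^4) * (1/(x+z.2)^3) with hFdef
  have hF : Summable F := hS1.sub hS2
  have hdiff : S 4 x * S 3 y - S 4 y * S 3 x = ∑' z, F z := by
    rw [P1, P2, ← Summable.tsum_sub hS1 hS2]
  set e : ℕ × ℕ ≃ ℕ × ℕ := Equiv.prodComm ℕ ℕ with he
  have hFe : Summable (fun z => F (e z)) := (e.summable_iff).mpr hF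
  have hswap : ∑' z, F (e z) = ∑' z, F z := e.tsum_eq F
  have hadd : ∑' z, (F z + F (e z)) = (∑' z, F z) + ∑' z, F (e z) := Summable.tsum_add hF hFe
  have hpos : 0 < ∑' z : ℕ × ℕ, (F z + F (e z)) := by
    refine Summable.tsum_pos (hF.add hFe) (fun z => (term_pos hx hxy z.1 z.2).le) (0, 0)
      (term_pos hx hxy 0 0)
  rw [hdiff]
  rw [hadd, hswap] at hpos
  linarith

/-- Fix `θ > 0` and let `p(a) = ψ₂(a) − (ψ₃(θ)/ψ₂(θ))·ψ₁(a)`.  Then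
`p'(a) = 6[S₄(a) − (S₄(θ)/S₃(θ))·S₃(a)]` is strictly positive for `0 < a < θ` and
strictly negative for `a > θ`. -/
theorem p_deriv_sign (θ : ℝ) (hθ : 0 < θ) :
    (∀ a : ℝ, 0 < a → a < θ → 0 < 6 * (S 4 a - S 4 θ / S 3 θ * S 3 a)) ∧
    (∀ a : ℝ, θ < a → 6 * (S 4 a - S 4 θ / S 3 θ * S 3 a) < 0) := by
  have h3θ : 0 < S 3 θ :=
    Summable.tsum_pos (S_summable (j := 3) (by norm_num) hθ) (fun k => by positivity) 0 (by positivity)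
  have h3θ' : S 3 θ ≠ 0 := ne_of_gt h3θ
  constructor
  · intro a ha haθ
    have hG : 0 < S 4 a * S 3 θ - S 4 θ * S 3 a := Gpos ha haθ
    have heq : 6 * (S 4 a - S 4 θ / S 3 θ * S 3 a)
        = 6 * ((S 4 a * S 3 θ - S 4 θ * S 3 a) / S 3 θ) := by
      field_simp
    rw [heq]
    have := div_pos hG h3θ
    linarith
  · intro a hθa
    have hG : 0 < S 4 θ * S 3 a - S 4 a * S 3 θ := Gpos hθ hθa
    have heq : 6 * (S 4 a - S 4 θ / S 3 θ * S 3 a)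
        = -(6 * ((S 4 θ * S 3 a - S 4 a * S 3 θ) / S 3 θ)) := by
      field_simp
      ring
    rw [heq]
    have := div_pos hG h3θ
    linarith
end

section
/- For every real x > 0 there exists θ > 0 such that x·S₂(θ) − S₃(θ) > x²/2. Equivalently, the rate function J(x) := sup_{θ > 0} [ (1/2)ψ₂(θ) + x·ψ₁(θ) ] satisfies J(x) > x²/2 for every x > 0 (the quenched large deviation rate of the uniform Howitt–Warren flow strictly exceeds the annealed Gaussian rate, i.e. the model exhibits strong disorder). -/
open Filter Topology Set

theorem summable_one_div_add_pow (θ : ℝ) {j : ℕ} (hj : 2 ≤ j) :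
    Summable fun k : ℕ => 1 / (θ + k) ^ j := by
  rw [← summable_abs_iff]
  simpa [abs_div, abs_pow, add_comm, Real.rpow_natCast] using
    (Real.summable_one_div_nat_add_rpow θ j).2 (by exact_mod_cast hj)

theorem S_pos {j : ℕ} (hj : 2 ≤ j) {θ : ℝ} (hθ : 0 < θ) : 0 < S j θ :=
  (summable_one_div_add_pow θ hj).tsum_pos (fun k => by positivity) 0 (by positivity)

theorem S_eq_one_div_pow_add_S_add_one (θ : ℝ) {j : ℕ} (hj : 2 ≤ j) :
    S j θ = 1 / θ ^ j + S j (θ + 1) := by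
  rw [S, (summable_one_div_add_pow θ hj).tsum_eq_zero_add, S]
  simp only [Nat.cast_zero, add_zero, Nat.cast_add_one, add_assoc, add_comm (1 : ℝ)]

theorem norm_one_div_add_pow_le {a θ : ℝ} (ha : 0 < a) (haθ : a ≤ θ) (j k : ℕ) :
    ‖1 / (θ + k) ^ j‖ ≤ 1 / (a + k) ^ j := by
  have hθ : 0 < θ := ha.trans_le haθ
  rw [Real.norm_of_nonneg (by positivity)]
  gcongr

theorem continuousOn_S {j : ℕ} (hj : 2 ≤ j) : ContinuousOn (S j) (Ioi 0) := by
  intro θ hθ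
  have hθ2 : 0 < θ / 2 := half_pos hθ
  have hcont : ContinuousOn (S j) (Ici (θ / 2)) := by
    refine continuousOn_tsum (fun k => ?_) (summable_one_div_add_pow (θ / 2) hj)
      (fun k y hy => norm_one_div_add_pow_le hθ2 hy j k)
    refine continuousOn_const.div (by fun_prop) fun y hy => ?_
    have : 0 < y := hθ2.trans_le hy
    positivity
  exact (hcont.continuousAt (Ici_mem_nhds (half_lt_self hθ))).continuousWithinAt

theorem tendsto_S_atTop {j : ℕ} (hj : 2 ≤ j) : Tendsto (S j) atTop (𝓝 0) := by
  have h := tendsto_tsum_of_dominated_convergence (𝓕 := atTop)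
    (f := fun (θ : ℝ) (k : ℕ) => 1 / (θ + k) ^ j) (g := fun _ => (0 : ℝ))
    (summable_one_div_add_pow 1 hj) (fun k => ?_) ?_
  · rw [tsum_zero] at h
    exact h
  · have hpow := (tendsto_pow_atTop (by omega : j ≠ 0)).comp
      (tendsto_atTop_add_const_right atTop (k : ℝ) tendsto_id)
    simpa [Function.comp_def, Pi.inv_def] using hpow.inv_tendsto_atTop
  · filter_upwards [eventually_ge_atTop 1] with θ hθ k
    exact norm_one_div_add_pow_le one_pos hθ j k

theorem one_div_pow_le_S {j : ℕ} (hj : 2 ≤ j) {θ : ℝ} (hθ : 0 < θ) : 1 / θ ^ j ≤ S j θ := by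
  have := S_pos hj (add_pos hθ one_pos)
  rw [S_eq_one_div_pow_add_S_add_one θ hj]
  linarith

theorem tendsto_S_two_nhdsGT_zero : Tendsto (S 2) (𝓝[>] 0) atTop := by
  have h : Tendsto (fun θ : ℝ => 1 / θ ^ 2) (𝓝[>] 0) atTop := by
    simpa [Function.comp_def] using
      (tendsto_pow_atTop (α := ℝ) two_ne_zero).comp tendsto_inv_nhdsGT_zero
  exact tendsto_atTop_mono' _
    (eventually_nhdsWithin_of_forall fun θ hθ => one_div_pow_le_S le_rfl hθ) h

theorem Ioi_zero_subset_image_S_two : Ioi 0 ⊆ S 2 '' Ioi 0 :=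
  isPreconnected_Ioi.intermediate_value_Ioi (l₂ := 𝓝[>] 0)
    (le_principal_iff.2 (Ioi_mem_atTop (0 : ℝ))) inf_le_right
    (continuousOn_S le_rfl) (tendsto_S_atTop le_rfl) tendsto_S_two_nhdsGT_zero

theorem le_tsum_of_sub_succ_le {f g : ℕ → ℝ} (hf : Summable f) (hg : Tendsto g atTop (𝓝 0))
    (h : ∀ n, g n - g (n + 1) ≤ f n) : g 0 ≤ ∑' n, f n := by
  have hlim : Tendsto (fun n => g 0 - g n) atTop (𝓝 (g 0)) := by
    simpa using tendsto_const_nhds.sub hg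
  refine le_of_tendsto_of_tendsto' hlim hf.hasSum.tendsto_sum_nat fun n => ?_
  rw [← Finset.sum_range_sub']
  exact Finset.sum_le_sum fun i _ => h i

theorem one_div_add_one_div_two_mul_sq_le_S_two {θ : ℝ} (hθ : 0 < θ) :
    1 / θ + 1 / (2 * θ ^ 2) ≤ S 2 θ := by
  set g : ℝ → ℝ := fun t => 1 / t + 1 / (2 * t ^ 2)
  have hg : Tendsto g atTop (𝓝 0) := by
    have h : Tendsto (fun t : ℝ => t⁻¹ + t⁻¹ ^ 2 / 2) atTop (𝓝 (0 + 0 ^ 2 / 2)) :=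
      tendsto_inv_atTop_zero.add ((tendsto_inv_atTop_zero.pow 2).div_const 2)
    rw [show (0 : ℝ) + 0 ^ 2 / 2 = 0 by norm_num] at h
    exact h.congr fun t => by simp only [g]; ring
  have hgθ : Tendsto (fun n : ℕ => g (θ + n)) atTop (𝓝 0) :=
    hg.comp (tendsto_atTop_add_const_left atTop θ tendsto_natCast_atTop_atTop)
  have hstep : ∀ t : ℝ, 0 < t → g t - g (t + 1) ≤ 1 / t ^ 2 := by
    intro t ht
    have key : 1 / t ^ 2 - (g t - g (t + 1)) = 1 / (2 * t ^ 2 * (t + 1) ^ 2) := by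
      simp only [g]
      field_simp
      ring
    have : 0 < 1 / (2 * t ^ 2 * (t + 1) ^ 2) := by positivity
    linarith
  have := le_tsum_of_sub_succ_le (summable_one_div_add_pow θ le_rfl) hgθ
    fun n => by simpa [add_assoc] using hstep (θ + n) (by positivity)
  simpa only [g, S, add_zero, Nat.cast_zero] using this

noncomputable def gap (θ : ℝ) : ℝ := S 2 θ ^ 2 - 2 * S 3 θ

theorem gap_add_one_lt {θ : ℝ} (hθ : 0 < θ) : gap (θ + 1) < gap θ := by
  have hS2 := one_div_add_one_div_two_mul_sq_le_S_two (add_pos hθ one_pos)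
  have hdiff : gap θ - gap (θ + 1) = 2 * S 2 (θ + 1) / θ ^ 2 + 1 / θ ^ 4 - 2 / θ ^ 3 := by
    rw [gap, gap, S_eq_one_div_pow_add_S_add_one θ le_rfl,
      S_eq_one_div_pow_add_S_add_one θ (by norm_num : 2 ≤ 3)]
    ring
  have hlb : 2 * (1 / (θ + 1) + 1 / (2 * (θ + 1) ^ 2)) / θ ^ 2 + 1 / θ ^ 4 - 2 / θ ^ 3
      = 1 / (θ ^ 4 * (θ + 1) ^ 2) := by
    field_simp
    ring
  have hmono : 2 * (1 / (θ + 1) + 1 / (2 * (θ + 1) ^ 2)) / θ ^ 2 ≤ 2 * S 2 (θ + 1) / θ ^ 2 := by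
    gcongr
  have hpos : 0 < 1 / (θ ^ 4 * (θ + 1) ^ 2) := by positivity
  linarith

theorem tendsto_gap_atTop : Tendsto gap atTop (𝓝 0) := by
  have h : Tendsto gap atTop (𝓝 (0 ^ 2 - 2 * 0)) :=
    ((tendsto_S_atTop le_rfl).pow 2).sub ((tendsto_S_atTop (by norm_num : 2 ≤ 3)).const_mul 2)
  simpa using h

theorem gap_pos {θ : ℝ} (hθ : 0 < θ) : 0 < gap θ := by
  have hanti : StrictAnti fun n : ℕ => gap (θ + n) := strictAnti_nat_of_succ_lt fun n => by
    simpa [add_assoc] using gap_add_one_lt (by positivity : 0 < θ + n)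
  have hlim : Tendsto (fun n : ℕ => gap (θ + n)) atTop (𝓝 0) :=
    tendsto_gap_atTop.comp (tendsto_atTop_add_const_left atTop θ tendsto_natCast_atTop_atTop)
  simpa using (hanti.antitone.le_of_tendsto hlim 1).trans_lt (hanti zero_lt_one)

/-- Strong disorder: for every `x > 0` there exists `θ > 0` with
`x·S₂(θ) − S₃(θ) > x²/2`; i.e. the quenched rate function
`J(x) = sup_{θ>0} [(1/2)ψ₂(θ) + xψ₁(θ)]` satisfies `J(x) > x²/2`. -/
theorem strong_disorder (x : ℝ) (hx : 0 < x) :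
    ∃ θ : ℝ, 0 < θ ∧ x ^ 2 / 2 < x * S 2 θ - S 3 θ := by
  obtain ⟨θ, hθ, hS2⟩ := Ioi_zero_subset_image_S_two (mem_Ioi.2 hx)
  refine ⟨θ, hθ, ?_⟩
  have hgap := gap_pos hθ
  rw [gap, hS2] at hgap
  rw [hS2]
  nlinarith
end
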